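/- For every r ≥ 2, setting l = 2^r − 1 and N = ℤ^r + ℤ·(1/l)(1, 2, 2², …, 2^{r−1}), there exists a finite family B_1,…,B_m of r-element subsets of s_G ∩ N, each of which is a ℤ-basis of the lattice N, such that σ0 = pos(B_1) ∪ … ∪ pos(B_m). (This is the combinatorial form, via basic triangulations of the junior simplex, of the statement that the Gorenstein cyclic quotient singularity of type (1/(2^r−1))(1, 2, 2², …, 2^{r−1}) admits a crepant full resolution in all dimensions r.) -/
import Mathlib


noncomputable section

/-- coordinatewise cast of a rational vector into `ℝ^r` -/
def castQR {r : ℕ} (v : Fin r → ℚ) : Fin r → ℝ := fun i => (v i : ℝ)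

/-- `pos(B)` : all linear combinations of the elements of the finite set `B ⊆ ℚ^r`
with nonnegative real coefficients. -/
def posR {r : ℕ} (B : Finset (Fin r → ℚ)) : Set (Fin r → ℝ) :=
  {y | ∃ c : (Fin r → ℚ) → ℝ, (∀ b, 0 ≤ c b) ∧ y = ∑ b ∈ B, c b • castQR b}

/-- the generator `(1/(2^r−1))(1, 2, 2², …, 2^{r−1})` of the lattice of weights -/
def wgt2 (r : ℕ) : Fin r → ℚ := fun i => ((2 : ℚ) ^ (i : ℕ)) / ((2 : ℚ) ^ r - 1)

/-- membership in the lattice `N = ℤ^r + ℤ·(1/(2^r−1))(1, 2, …, 2^{r−1})` -/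
def memN2 (r : ℕ) (v : Fin r → ℚ) : Prop :=
  ∃ (a : Fin r → ℤ) (c : ℤ), v = (fun i => (a i : ℚ)) + c • wgt2 r

namespace GPS

variable {r : ℕ}

/-- exponent `(k - t) mod r` -/
def EE (r : ℕ) (t k : Fin r) : ℕ := ((k : ℕ) + r - (t : ℕ)) % r

def ee (i : Fin r) : Fin r → ℚ := fun k => if k = i then 1 else 0

def hh (r : ℕ) (t : Fin r) : Fin r → ℚ := fun i => (2 : ℚ) ^ (EE r t i) / ((2:ℚ) ^ r - 1)

def VV (r : ℕ) (T : Finset (Fin r)) : Finset (Fin r → ℚ) :=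
  Tᶜ.image ee ∪ T.image (hh r)

section pred
variable (T : Finset (Fin r)) (hT : T.Nonempty)

/-- cyclic predecessor-or-equal of `k` in `T` -/
def ρ (k : Fin r) : Fin r :=
  if h : ((T.filter (· ≤ k)).Nonempty) then (T.filter (· ≤ k)).max' h else T.max' hT

/-- strict cyclic predecessor of `t` in `T` -/
def π (t : Fin r) : Fin r :=
  if h : ((T.filter (· < t)).Nonempty) then (T.filter (· < t)).max' h else T.max' hT

/-- cyclic successor of `s` in `T` -/
def σc (s : Fin r) : Fin r :=
  if h : ((T.filter (s < ·)).Nonempty) then (T.filter (s < ·)).min' h else T.min' hT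

/-- the "gap" exponent of `t` : `(t - π t) mod r`, with value `r` when `π t = t`. -/
def G (t : Fin r) : ℕ := ((t : ℕ) + r - (π T hT t : ℕ) - 1) % r + 1

lemma rho_mem (k : Fin r) : ρ T hT k ∈ T := by
  unfold ρ; split
  · next h => exact Finset.mem_of_mem_filter _ ((T.filter (· ≤ k)).max'_mem h)
  · exact T.max'_mem hT

lemma pi_mem (t : Fin r) : π T hT t ∈ T := by
  unfold π; split
  · next h => exact Finset.mem_of_mem_filter _ ((T.filter (· < t)).max'_mem h)
  · exact T.max'_mem hT

lemma sigma_mem (s : Fin r) : σc T hT s ∈ T := by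
  unfold σc; split
  · next h => exact Finset.mem_of_mem_filter _ ((T.filter (s < ·)).min'_mem h)
  · exact T.min'_mem hT

/-- dichotomy for ρ -/
lemma rho_spec (k : Fin r) :
    (ρ T hT k ≤ k ∧ ∀ u ∈ T, u ≤ k → u ≤ ρ T hT k) ∨
    ((∀ u ∈ T, k < u) ∧ ∀ u ∈ T, u ≤ ρ T hT k) := by
  unfold ρ; split
  · next h =>
    left
    constructor
    · have := (T.filter (· ≤ k)).max'_mem h
      exact (Finset.mem_filter.1 this).2
    · intro u hu huk
      exact Finset.le_max' (T.filter (· ≤ k)) u (Finset.mem_filter.2 ⟨hu, huk⟩)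
  · next h =>
    right
    constructor
    · intro u hu
      by_contra hc
      exact h ⟨u, Finset.mem_filter.2 ⟨hu, not_lt.1 hc⟩⟩
    · intro u hu; exact Finset.le_max' _ _ hu

/-- dichotomy for π -/
lemma pi_spec (t : Fin r) :
    (π T hT t < t ∧ ∀ u ∈ T, u < t → u ≤ π T hT t) ∨
    ((∀ u ∈ T, t ≤ u) ∧ ∀ u ∈ T, u ≤ π T hT t) := by
  unfold π; split
  · next h =>
    left
    refine ⟨(Finset.mem_filter.1 ((T.filter (· < t)).max'_mem h)).2, ?_⟩
    intro u hu hut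
    exact Finset.le_max' (T.filter (· < t)) u (Finset.mem_filter.2 ⟨hu, hut⟩)
  · next h =>
    right
    refine ⟨fun u hu => ?_, fun u hu => Finset.le_max' _ _ hu⟩
    by_contra hc
    exact h ⟨u, Finset.mem_filter.2 ⟨hu, not_le.1 hc⟩⟩

/-- dichotomy for σc -/
lemma sigma_spec (s : Fin r) :
    (s < σc T hT s ∧ ∀ u ∈ T, s < u → σc T hT s ≤ u) ∨
    ((∀ u ∈ T, u ≤ s) ∧ ∀ u ∈ T, σc T hT s ≤ u) := by
  unfold σc; split
  · next h =>
    left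
    refine ⟨(Finset.mem_filter.1 ((T.filter (s < ·)).min'_mem h)).2, ?_⟩
    intro u hu hsu
    exact Finset.min'_le _ _ (Finset.mem_filter.2 ⟨hu, hsu⟩)
  · next h =>
    right
    refine ⟨fun u hu => ?_, fun u hu => Finset.min'_le _ _ hu⟩
    by_contra hc
    exact h ⟨u, Finset.mem_filter.2 ⟨hu, not_le.1 hc⟩⟩

lemma rho_self {k : Fin r} (hk : k ∈ T) : ρ T hT k = k := by
  rcases rho_spec T hT k with ⟨h1, h2⟩ | ⟨h1, h2⟩
  · exact le_antisymm h1 (h2 k hk le_rfl)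
  · exact absurd (h1 k hk) (lt_irrefl k)

lemma pi_sigma {s : Fin r} (hs : s ∈ T) : π T hT (σc T hT s) = s := by
  rcases sigma_spec T hT s with ⟨h1, h2⟩ | ⟨h1, h2⟩
  · rcases pi_spec T hT (σc T hT s) with ⟨g1, g2⟩ | ⟨g1, g2⟩
    · refine le_antisymm ?_ (g2 s hs h1)
      by_contra hc
      have h3 : σc T hT s ≤ π T hT (σc T hT s) :=
        h2 _ (pi_mem T hT _) (not_le.1 hc)
      exact absurd g1 (not_lt.2 h3)
    · exact absurd (g1 s hs) (not_le.2 h1)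
  · rcases pi_spec T hT (σc T hT s) with ⟨g1, g2⟩ | ⟨g1, g2⟩
    · exact absurd g1 (not_lt.2 (h2 _ (pi_mem T hT _)))
    · exact le_antisymm (h1 _ (pi_mem T hT _)) (g2 s hs)

lemma sigma_pi {t : Fin r} (ht : t ∈ T) : σc T hT (π T hT t) = t := by
  rcases pi_spec T hT t with ⟨h1, h2⟩ | ⟨h1, h2⟩
  · rcases sigma_spec T hT (π T hT t) with ⟨g1, g2⟩ | ⟨g1, g2⟩
    · refine le_antisymm (g2 t ht h1) ?_
      by_contra hc
      have h3 : σc T hT (π T hT t) ≤ π T hT t :=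
        h2 _ (sigma_mem T hT _) (not_le.1 hc)
      exact absurd g1 (not_lt.2 h3)
    · exact absurd (g1 t ht) (not_le.2 h1)
  · rcases sigma_spec T hT (π T hT t) with ⟨g1, g2⟩ | ⟨g1, g2⟩
    · exact absurd g1 (not_lt.2 (h2 _ (sigma_mem T hT _)))
    · exact le_antisymm (g2 t ht) (h1 _ (sigma_mem T hT _))


lemma mod1 {x r : ℕ} (h : x < r) : x % r = x := Nat.mod_eq_of_lt h
lemma mod2 {x r : ℕ} (h1 : r ≤ x) (h2 : x < r + r) : x % r = x - r := by
  rw [Nat.mod_eq_sub_mod h1, Nat.mod_eq_of_lt]; omega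

lemma expo (T : Finset (Fin r)) (hT : T.Nonempty) (t k : Fin r) (ht : t ∈ T) :
    G T hT t + EE r t k = EE r (π T hT t) k + (if π T hT t = ρ T hT k then r else 0) := by
  have hpm : π T hT t ∈ T := pi_mem T hT t
  have hrhom : ρ T hT k ∈ T := rho_mem T hT k
  have htv : (t : ℕ) < r := t.is_lt
  have hkv : (k : ℕ) < r := k.is_lt
  have hpv : (π T hT t : ℕ) < r := (π T hT t).is_lt
  unfold G EE
  rcases pi_spec T hT t with ⟨h1, h2⟩ | ⟨h1, h2⟩
  · have h1' : (π T hT t : ℕ) < (t : ℕ) := h1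
    rcases Nat.lt_or_ge (k : ℕ) (t : ℕ) with hkt | hkt
    · rcases Nat.lt_or_ge (k : ℕ) (π T hT t : ℕ) with hkp | hkp
      · -- k < p < t : not equal
        have hne : ¬ (π T hT t = ρ T hT k) := by
          intro he
          rcases rho_spec T hT k with ⟨g1, g2⟩ | ⟨g1, g2⟩
          · have g1' : (ρ T hT k : ℕ) ≤ (k : ℕ) := g1
            rw [← he] at g1'; omega
          · have g2' : (t : ℕ) ≤ (ρ T hT k : ℕ) := g2 t ht
            rw [← he] at g2'; omega
        rw [if_neg hne, mod2 (show r ≤ (t:ℕ) + r - (π T hT t : ℕ) - 1 by omega)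
                 (show (t:ℕ) + r - (π T hT t : ℕ) - 1 < r + r by omega),
            mod1 (show (k:ℕ) + r - (t:ℕ) < r by omega),
            mod1 (show (k:ℕ) + r - (π T hT t : ℕ) < r by omega)]
        omega
      · -- p ≤ k < t : equal
        have heq : π T hT t = ρ T hT k := by
          rcases rho_spec T hT k with ⟨g1, g2⟩ | ⟨g1, g2⟩
          · have g1' : (ρ T hT k : ℕ) ≤ (k : ℕ) := g1
            have hle : π T hT t ≤ ρ T hT k :=
              g2 (π T hT t) hpm (show (π T hT t : ℕ) ≤ (k:ℕ) from hkp)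
            have hge : ρ T hT k ≤ π T hT t :=
              h2 (ρ T hT k) hrhom (show (ρ T hT k : ℕ) < (t:ℕ) by omega)
            exact le_antisymm hle hge
          · have := g1 (π T hT t) hpm
            have : (k : ℕ) < (π T hT t : ℕ) := this
            omega
        rw [if_pos heq, mod2 (show r ≤ (t:ℕ) + r - (π T hT t : ℕ) - 1 by omega)
                 (show (t:ℕ) + r - (π T hT t : ℕ) - 1 < r + r by omega),
            mod1 (show (k:ℕ) + r - (t:ℕ) < r by omega),
            mod2 (show r ≤ (k:ℕ) + r - (π T hT t : ℕ) by omega)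
                 (show (k:ℕ) + r - (π T hT t : ℕ) < r + r by omega)]
        omega
    · -- t ≤ k : not equal
      have hne : ¬ (π T hT t = ρ T hT k) := by
        intro he
        rcases rho_spec T hT k with ⟨g1, g2⟩ | ⟨g1, g2⟩
        · have g2' : t ≤ ρ T hT k := g2 t ht (show (t:ℕ) ≤ (k:ℕ) from hkt)
          have g2'' : (t:ℕ) ≤ (ρ T hT k : ℕ) := g2'
          rw [← he] at g2''; omega
        · have g1' : (k : ℕ) < (t : ℕ) := g1 t ht
          omega
      rw [if_neg hne, mod2 (show r ≤ (t:ℕ) + r - (π T hT t : ℕ) - 1 by omega)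
                 (show (t:ℕ) + r - (π T hT t : ℕ) - 1 < r + r by omega),
          mod2 (show r ≤ (k:ℕ) + r - (t:ℕ) by omega)
               (show (k:ℕ) + r - (t:ℕ) < r + r by omega),
          mod2 (show r ≤ (k:ℕ) + r - (π T hT t : ℕ) by omega)
               (show (k:ℕ) + r - (π T hT t : ℕ) < r + r by omega)]
      omega
  · -- t is the min of T, π t is the max of T
    have h1' : (t : ℕ) ≤ (π T hT t : ℕ) := h1 (π T hT t) hpm
    rcases Nat.lt_or_ge (k : ℕ) (t : ℕ) with hkt | hkt
    · -- k < t ≤ p : equal (ρ k = max T = p)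
      have heq : π T hT t = ρ T hT k := by
        rcases rho_spec T hT k with ⟨g1, g2⟩ | ⟨g1, g2⟩
        · have g1' : (ρ T hT k : ℕ) ≤ (k : ℕ) := g1
          have : (t : ℕ) ≤ (ρ T hT k : ℕ) := h1 (ρ T hT k) hrhom
          omega
        · exact le_antisymm (g2 (π T hT t) hpm) (h2 (ρ T hT k) hrhom)
      rw [if_pos heq, mod1 (show (t:ℕ) + r - (π T hT t : ℕ) - 1 < r by omega),
          mod1 (show (k:ℕ) + r - (t:ℕ) < r by omega),
          mod1 (show (k:ℕ) + r - (π T hT t : ℕ) < r by omega)]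
      omega
    · rcases Nat.lt_or_ge (k : ℕ) (π T hT t : ℕ) with hkp | hkp
      · -- t ≤ k < p : not equal
        have hne : ¬ (π T hT t = ρ T hT k) := by
          intro he
          rcases rho_spec T hT k with ⟨g1, g2⟩ | ⟨g1, g2⟩
          · have g1' : (ρ T hT k : ℕ) ≤ (k : ℕ) := g1
            rw [← he] at g1'; omega
          · have g1' : (k : ℕ) < (t : ℕ) := g1 t ht
            omega
        rw [if_neg hne, mod1 (show (t:ℕ) + r - (π T hT t : ℕ) - 1 < r by omega),
            mod2 (show r ≤ (k:ℕ) + r - (t:ℕ) by omega)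
                 (show (k:ℕ) + r - (t:ℕ) < r + r by omega),
            mod1 (show (k:ℕ) + r - (π T hT t : ℕ) < r by omega)]
        omega
      · -- p ≤ k : equal
        have heq : π T hT t = ρ T hT k := by
          rcases rho_spec T hT k with ⟨g1, g2⟩ | ⟨g1, g2⟩
          · exact le_antisymm
              (g2 (π T hT t) hpm (show (π T hT t : ℕ) ≤ (k:ℕ) from hkp))
              (h2 (ρ T hT k) hrhom)
          · have g1' : (k : ℕ) < (π T hT t : ℕ) := g1 (π T hT t) hpm
            omega
        rw [if_pos heq, mod1 (show (t:ℕ) + r - (π T hT t : ℕ) - 1 < r by omega),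
            mod2 (show r ≤ (k:ℕ) + r - (t:ℕ) by omega)
                 (show (k:ℕ) + r - (t:ℕ) < r + r by omega),
            mod2 (show r ≤ (k:ℕ) + r - (π T hT t : ℕ) by omega)
                 (show (k:ℕ) + r - (π T hT t : ℕ) < r + r by omega)]
        omega


/-- the key telescoping identity -/
lemma IDK {R : Type*} [CommRing R] (T : Finset (Fin r)) (hT : T.Nonempty)
    (y : Fin r → R) (k : Fin r) :
    ∑ t ∈ T, ((2:R)^(G T hT t) * y (π T hT t) - y t) * 2^(EE r t k)
      = ((2:R)^r - 1) * (2^(EE r (ρ T hT k) k) * y (ρ T hT k)) := by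
  have step1 : ∑ t ∈ T, ((2:R)^(G T hT t) * y (π T hT t) - y t) * 2^(EE r t k)
      = (∑ t ∈ T, ((2:R)^(G T hT t) * y (π T hT t)) * 2^(EE r t k))
        - ∑ t ∈ T, y t * 2^(EE r t k) := by
    rw [← Finset.sum_sub_distrib]
    exact Finset.sum_congr rfl fun t _ => by ring
  have reindex : ∑ t ∈ T, ((2:R)^(G T hT t) * y (π T hT t)) * 2^(EE r t k)
      = ∑ s ∈ T, (2:R)^(EE r s k) * y s * (if s = ρ T hT k then (2:R)^r else 1) := by
    refine Finset.sum_nbij' (π T hT) (σc T hT)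
      (fun t ht => pi_mem T hT t) (fun s hs => sigma_mem T hT s)
      (fun t ht => sigma_pi T hT ht) (fun s hs => pi_sigma T hT hs)
      (fun t ht => ?_)
    have h := expo T hT t k ht
    split_ifs with hif
    · rw [if_pos hif] at h
      have : (2:R)^(G T hT t) * 2^(EE r t k) = 2^(EE r (π T hT t) k) * 2^r := by
        rw [← pow_add, ← pow_add, h]
      calc (2:R)^(G T hT t) * y (π T hT t) * 2^(EE r t k)
          = ((2:R)^(G T hT t) * 2^(EE r t k)) * y (π T hT t) := by ring
        _ = ((2:R)^(EE r (π T hT t) k) * 2^r) * y (π T hT t) := by rw [this]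
        _ = _ := by ring
    · rw [if_neg hif, add_zero] at h
      have : (2:R)^(G T hT t) * 2^(EE r t k) = 2^(EE r (π T hT t) k) := by
        rw [← pow_add, h]
      calc (2:R)^(G T hT t) * y (π T hT t) * 2^(EE r t k)
          = ((2:R)^(G T hT t) * 2^(EE r t k)) * y (π T hT t) := by ring
        _ = (2:R)^(EE r (π T hT t) k) * y (π T hT t) := by rw [this]
        _ = _ := by ring
  have split2 : ∑ s ∈ T, (2:R)^(EE r s k) * y s * (if s = ρ T hT k then (2:R)^r else 1)
      = (∑ s ∈ T, y s * 2^(EE r s k))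
        + ((2:R)^r - 1) * (2^(EE r (ρ T hT k) k) * y (ρ T hT k)) := by
    have : ∀ s ∈ T, (2:R)^(EE r s k) * y s * (if s = ρ T hT k then (2:R)^r else 1)
        = y s * 2^(EE r s k)
          + (if s = ρ T hT k then ((2:R)^r - 1) * (2^(EE r s k) * y s) else 0) := by
      intro s _
      split_ifs <;> ring
    rw [Finset.sum_congr rfl this, Finset.sum_add_distrib, Finset.sum_ite_eq',
        if_pos (rho_mem T hT k)]
  rw [step1, reindex, split2]
  ring


section basicfacts

lemma EE_lt (t k : Fin r) : EE r t k < r := Nat.mod_lt _ t.pos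

lemma EE_self (t : Fin r) : EE r t t = 0 := by
  unfold EE
  have h : (t:ℕ) + r - (t:ℕ) = r := by omega
  rw [h, Nat.mod_self]

lemma EE_eq_zero_iff {t k : Fin r} : EE r t k = 0 ↔ k = t := by
  unfold EE
  constructor
  · intro h
    rcases Nat.lt_or_ge (k:ℕ) (t:ℕ) with hlt | hge
    · rw [mod1 (show (k:ℕ) + r - (t:ℕ) < r by omega)] at h
      have := t.is_lt; omega
    · rw [mod2 (show r ≤ (k:ℕ) + r - (t:ℕ) by omega)
          (show (k:ℕ) + r - (t:ℕ) < r + r by have := k.is_lt; omega)] at h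
      have hv : (k:ℕ) = (t:ℕ) := by have := t.is_lt; omega
      exact Fin.ext hv
  · rintro rfl; exact EE_self k

lemma Lpos (hr1 : 1 ≤ r) : (0:ℚ) < 2 ^ r - 1 := by
  have h : (2:ℚ) ^ 1 ≤ 2 ^ r := pow_le_pow_right₀ (by norm_num) hr1
  norm_num at h; linarith

lemma hh_pos (hr1 : 1 ≤ r) (t i : Fin r) : 0 < hh r t i :=
  div_pos (pow_pos (by norm_num) _) (Lpos hr1)

lemma hh_nonneg (hr1 : 1 ≤ r) (t i : Fin r) : 0 ≤ hh r t i := le_of_lt (hh_pos hr1 t i)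

lemma ee_nonneg (i k : Fin r) : 0 ≤ ee i k := by
  unfold ee; split_ifs <;> norm_num

lemma ee_inj : Function.Injective (ee (r := r)) := by
  intro i j h
  have := congrFun h i
  unfold ee at this
  simp only [if_pos rfl] at this
  by_contra hne
  rw [if_neg (fun hc => hne hc)] at this
  norm_num at this

lemma hh_inj (hr1 : 1 ≤ r) : Function.Injective (hh r) := by
  intro t t' h
  have h1 := congrFun h t
  unfold hh at h1
  have hl : ((2:ℚ) ^ r - 1) ≠ 0 := ne_of_gt (Lpos hr1)
  rw [div_eq_div_iff hl hl] at h1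
  have h2 : (2:ℚ) ^ (EE r t t) = 2 ^ (EE r t' t) := mul_right_cancel₀ hl h1
  rw [EE_self] at h2
  have h3 : EE r t' t = 0 := by
    by_contra hc
    have : (2:ℚ) ^ 0 < 2 ^ (EE r t' t) := by
      apply pow_lt_pow_right₀ (by norm_num)
      omega
    rw [pow_zero] at this h2; linarith
  exact EE_eq_zero_iff.1 h3

lemma ee_ne_hh (hr2 : 2 ≤ r) (i t : Fin r) : ee i ≠ hh r t := by
  intro h
  obtain ⟨k, hk⟩ := Fintype.exists_ne_of_one_lt_card (by simp; omega) i
  have hz := congrFun h k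
  unfold ee at hz
  rw [if_neg hk] at hz
  have hp := hh_pos (by omega) t k
  linarith

lemma card_VV (hr2 : 2 ≤ r) (T : Finset (Fin r)) : (VV r T).card = r := by
  have hdisj : Disjoint (Tᶜ.image ee) (T.image (hh r)) := by
    rw [Finset.disjoint_left]
    rintro x hx1 hx2
    obtain ⟨i, _, rfl⟩ := Finset.mem_image.1 hx1
    obtain ⟨t, _, ht⟩ := Finset.mem_image.1 hx2
    exact ee_ne_hh hr2 i t ht.symm
  unfold VV
  rw [Finset.card_union_of_disjoint hdisj,
      Finset.card_image_of_injective _ ee_inj,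
      Finset.card_image_of_injective _ (hh_inj (by omega)),
      Finset.card_compl]
  have := Finset.card_le_univ T
  simp only [Fintype.card_fin] at *
  omega

lemma sum_pow_EE (t : Fin r) : ∑ k : Fin r, (2:ℚ) ^ (EE r t k) = 2 ^ r - 1 := by
  have hr0 : 0 < r := t.pos
  have key : ∑ k : Fin r, (2:ℚ) ^ (EE r t k) = ∑ j ∈ Finset.range r, (2:ℚ) ^ j := by
    refine Finset.sum_nbij' (fun k => EE r t k) (fun j => ⟨(j + (t:ℕ)) % r, Nat.mod_lt _ hr0⟩)
      (fun k _ => Finset.mem_range.2 (EE_lt t k)) (fun j _ => Finset.mem_univ _)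
      (fun k _ => ?_) (fun j hj => ?_) (fun k _ => rfl)
    · apply Fin.ext
      show ((EE r t k) + (t:ℕ)) % r = (k:ℕ)
      unfold EE
      rcases Nat.lt_or_ge (k:ℕ) (t:ℕ) with hlt | hge
      · rw [mod1 (show (k:ℕ) + r - (t:ℕ) < r by omega)]
        have h : (k:ℕ) + r - (t:ℕ) + (t:ℕ) = (k:ℕ) + r := by omega
        rw [h, Nat.add_mod_right, mod1 k.is_lt]
      · rw [mod2 (show r ≤ (k:ℕ) + r - (t:ℕ) by omega)
            (show (k:ℕ) + r - (t:ℕ) < r + r by have := k.is_lt; omega)]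
        have h : (k:ℕ) + r - (t:ℕ) - r + (t:ℕ) = (k:ℕ) := by have := k.is_lt; omega
        rw [h, mod1 k.is_lt]
    · have hj' : j < r := Finset.mem_range.1 hj
      show EE r t ⟨(j + (t:ℕ)) % r, _⟩ = j
      unfold EE
      simp only
      rcases Nat.lt_or_ge (j + (t:ℕ)) r with hlt | hge
      · rw [mod1 hlt]
        rw [mod2 (by omega) (by have := t.is_lt; omega)]
        omega
      · rw [mod2 hge (by have := t.is_lt; omega)]
        have h : j + (t:ℕ) - r + r - (t:ℕ) = j := by omega
        rw [h, mod1 hj']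
  rw [key, geom_sum_eq (by norm_num : (2:ℚ) ≠ 1)]
  norm_num

lemma sum_hh (hr1 : 1 ≤ r) (t : Fin r) : ∑ k, hh r t k = 1 := by
  unfold hh
  rw [← Finset.sum_div, sum_pow_EE t, div_self (ne_of_gt (Lpos hr1))]

lemma memN2_ee (i : Fin r) : memN2 r (ee i) := by
  refine ⟨fun k => if k = i then 1 else 0, 0, ?_⟩
  funext k
  simp only [ee, Pi.add_apply, zero_smul, Pi.zero_apply, add_zero]
  split_ifs <;> norm_num

lemma memN2_hh (hr1 : 1 ≤ r) (t : Fin r) : memN2 r (hh r t) := by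
  refine ⟨fun i => -(if (t:ℕ) ≤ (i:ℕ) then (2:ℤ)^((i:ℕ)-(t:ℕ)) else 0), 2^(r - (t:ℕ)), ?_⟩
  funext i
  have hl : ((2:ℚ) ^ r - 1) ≠ 0 := ne_of_gt (Lpos hr1)
  simp only [hh, Pi.add_apply, Pi.smul_apply, wgt2]
  simp only [zsmul_eq_mul]
  push_cast
  by_cases hti : (t:ℕ) ≤ (i:ℕ)
  · rw [if_pos hti]
    unfold EE
    rw [mod2 (show r ≤ (i:ℕ) + r - (t:ℕ) by omega)
        (show (i:ℕ) + r - (t:ℕ) < r + r by have := i.is_lt; omega)]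
    have h : (i:ℕ) + r - (t:ℕ) - r = (i:ℕ) - (t:ℕ) := by omega
    rw [h]
    have e1 : (2:ℚ)^(r-(t:ℕ)) * (2:ℚ)^(i:ℕ) = (2:ℚ)^((i:ℕ)-(t:ℕ)) * (2:ℚ)^r := by
      rw [← pow_add, ← pow_add]; congr 1
      have := t.is_lt; omega
    field_simp
    linear_combination (-1 : ℚ) * e1
  · rw [if_neg hti]
    unfold EE
    rw [mod1 (show (i:ℕ) + r - (t:ℕ) < r by omega)]
    have e1 : (2:ℚ)^((i:ℕ)+r-(t:ℕ)) = 2^(r-(t:ℕ)) * 2^(i:ℕ) := by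
      rw [← pow_add]; congr 1
      have := t.is_lt; omega
    rw [e1]; ring

end basicfacts


section span
/-- the lattice N as a ℤ-submodule -/
def NN (r : ℕ) : Submodule ℤ (Fin r → ℚ) where
  carrier := {v | memN2 r v}
  zero_mem' := ⟨0, 0, by funext i; simp⟩
  add_mem' := by
    rintro a b ⟨xa, ca, rfl⟩ ⟨xb, cb, rfl⟩
    refine ⟨xa + xb, ca + cb, ?_⟩
    funext i
    simp only [Pi.add_apply, Pi.smul_apply]
    push_cast
    rw [add_smul]
    simp only [Pi.add_apply, Pi.smul_apply, Pi.mul_apply, Pi.intCast_apply, smul_eq_mul, zsmul_eq_mul]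
    push_cast
    ring
  smul_mem' := by
    rintro z v ⟨x, c, rfl⟩
    refine ⟨z • x, z * c, ?_⟩
    funext i
    simp only [Pi.add_apply, Pi.smul_apply, Pi.mul_apply, Pi.intCast_apply, smul_eq_mul, zsmul_eq_mul]
    push_cast
    ring

lemma mem_NN {v : Fin r → ℚ} : v ∈ NN r ↔ memN2 r v := Iff.rfl

lemma hh_coord (hr1 : 1 ≤ r) (t i : Fin r) :
    hh r t i = -(if (t:ℕ) ≤ (i:ℕ) then ((2:ℚ))^((i:ℕ)-(t:ℕ)) else 0)
      + (2:ℚ)^(r-(t:ℕ)) * wgt2 r i := by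
  have hl : ((2:ℚ) ^ r - 1) ≠ 0 := ne_of_gt (Lpos hr1)
  simp only [hh, wgt2]
  by_cases hti : (t:ℕ) ≤ (i:ℕ)
  · rw [if_pos hti]
    unfold EE
    rw [mod2 (show r ≤ (i:ℕ) + r - (t:ℕ) by omega)
        (show (i:ℕ) + r - (t:ℕ) < r + r by have := i.is_lt; omega)]
    have h : (i:ℕ) + r - (t:ℕ) - r = (i:ℕ) - (t:ℕ) := by omega
    rw [h]
    have e1 : (2:ℚ)^(r-(t:ℕ)) * (2:ℚ)^(i:ℕ) = (2:ℚ)^((i:ℕ)-(t:ℕ)) * (2:ℚ)^r := by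
      rw [← pow_add, ← pow_add]; congr 1
      have := t.is_lt; omega
    field_simp
    linear_combination (-1 : ℚ) * e1
  · rw [if_neg hti]
    unfold EE
    rw [mod1 (show (i:ℕ) + r - (t:ℕ) < r by omega)]
    have e1 : (2:ℚ)^((i:ℕ)+r-(t:ℕ)) = 2^(r-(t:ℕ)) * 2^(i:ℕ) := by
      rw [← pow_add]; congr 1
      have := t.is_lt; omega
    rw [e1]; ring

lemma expansion {K : Type*} [Field K] (hL : (2:K)^r - 1 ≠ 0)
    (T : Finset (Fin r)) (hT : T.Nonempty) (y : Fin r → K) (j : Fin r) :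
    (∑ t ∈ T, ((2:K)^(G T hT t) * y (π T hT t) - y t) * ((2:K)^(EE r t j) / ((2:K)^r - 1)))
      + ∑ i ∈ Tᶜ, (y i - (2:K)^(EE r (ρ T hT i) i) * y (ρ T hT i)) * (if j = i then 1 else 0)
      = y j := by
  have h1 : (∑ t ∈ T, ((2:K)^(G T hT t) * y (π T hT t) - y t) * ((2:K)^(EE r t j) / ((2:K)^r - 1)))
      = (2:K)^(EE r (ρ T hT j) j) * y (ρ T hT j) := by
    have e1 : ∀ t ∈ T, ((2:K)^(G T hT t) * y (π T hT t) - y t) * ((2:K)^(EE r t j) / ((2:K)^r - 1))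
        = (((2:K)^(G T hT t) * y (π T hT t) - y t) * (2:K)^(EE r t j)) / ((2:K)^r - 1) :=
      fun t _ => (mul_div_assoc _ _ _).symm
    rw [Finset.sum_congr rfl e1, ← Finset.sum_div, IDK T hT y j,
        mul_div_cancel_left₀ _ hL]
  have h2 : ∑ i ∈ Tᶜ, (y i - (2:K)^(EE r (ρ T hT i) i) * y (ρ T hT i)) * (if j = i then 1 else 0)
      = if j ∈ T then 0 else (y j - (2:K)^(EE r (ρ T hT j) j) * y (ρ T hT j)) := by
    have e2 : ∀ i ∈ Tᶜ, (y i - (2:K)^(EE r (ρ T hT i) i) * y (ρ T hT i)) * (if j = i then 1 else 0)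
        = if i = j then (y i - (2:K)^(EE r (ρ T hT i) i) * y (ρ T hT i)) else 0 := by
      intro i _
      rcases eq_or_ne i j with rfl | hne
      · simp
      · rw [if_neg (fun h => hne h.symm), if_neg hne, mul_zero]
    rw [Finset.sum_congr rfl e2, Finset.sum_ite_eq']
    by_cases hj : j ∈ T <;> simp [hj]
  rw [h1, h2]
  by_cases hj : j ∈ T
  · rw [if_pos hj, add_zero, rho_self T hT hj, EE_self, pow_zero, one_mul]
  · rw [if_neg hj]; ring

lemma ee_mem_span (hr1 : 1 ≤ r) (T : Finset (Fin r)) (hT : T.Nonempty) (k : Fin r) :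
    ee k ∈ Submodule.span ℤ ((VV r T : Set (Fin r → ℚ))) := by
  have hL : ((2:ℚ)^r - 1) ≠ 0 := ne_of_gt (Lpos hr1)
  have hexp : ee k
      = (∑ t ∈ T, ((2:ℤ)^(G T hT t) * (if π T hT t = k then 1 else 0)
            - (if t = k then 1 else 0)) • hh r t)
        + ∑ i ∈ Tᶜ, ((if i = k then 1 else 0)
            - (2:ℤ)^(EE r (ρ T hT i) i) * (if ρ T hT i = k then 1 else 0)) • ee i := by
    funext j
    have hE := expansion hL T hT (ee k) j
    have hc : ∀ t : Fin r,
        (((2:ℤ)^(G T hT t) * (if π T hT t = k then 1 else 0)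
          - (if t = k then 1 else 0) : ℤ) : ℚ)
        = (2:ℚ)^(G T hT t) * ee k (π T hT t) - ee k t := by
      intro t
      show _ = (2:ℚ)^(G T hT t) * (if π T hT t = k then (1:ℚ) else 0)
          - (if t = k then (1:ℚ) else 0)
      split_ifs <;> push_cast <;> ring
    have hd : ∀ i : Fin r,
        (((if i = k then 1 else 0)
          - (2:ℤ)^(EE r (ρ T hT i) i) * (if ρ T hT i = k then 1 else 0) : ℤ) : ℚ)
        = ee k i - (2:ℚ)^(EE r (ρ T hT i) i) * ee k (ρ T hT i) := by
      intro i
      show _ = (if i = k then (1:ℚ) else 0)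
          - (2:ℚ)^(EE r (ρ T hT i) i) * (if ρ T hT i = k then (1:ℚ) else 0)
      split_ifs <;> push_cast <;> ring
    simp only [Pi.add_apply, Finset.sum_apply, Pi.smul_apply, Pi.mul_apply, Pi.intCast_apply,
      zsmul_eq_mul, hc, hd]
    exact hE.symm
  rw [hexp]
  refine add_mem (Submodule.sum_mem _ fun t ht => Submodule.smul_mem _ _
      (Submodule.subset_span ?_))
    (Submodule.sum_mem _ fun i hi => Submodule.smul_mem _ _ (Submodule.subset_span ?_))
  · exact Finset.mem_coe.2 (Finset.mem_union_right _ (Finset.mem_image_of_mem _ ht))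
  · exact Finset.mem_coe.2 (Finset.mem_union_left _ (Finset.mem_image_of_mem _ hi))

lemma coordvec_mem_span (hr1 : 1 ≤ r) (T : Finset (Fin r)) (hT : T.Nonempty) (a : Fin r → ℤ) :
    (fun i => ((a i : ℚ))) ∈ Submodule.span ℤ ((VV r T : Set (Fin r → ℚ))) := by
  have hrep : (fun i => ((a i : ℚ))) = ∑ i : Fin r, a i • ee i := by
    funext j
    simp only [Finset.sum_apply, Pi.smul_apply, Pi.mul_apply, Pi.intCast_apply, zsmul_eq_mul]
    have e2 : ∀ i ∈ Finset.univ (α := Fin r), (a i : ℚ) * ee i j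
        = if i = j then (a i : ℚ) else 0 := by
      intro i _
      have he : ee i j = if j = i then (1:ℚ) else 0 := rfl
      rcases eq_or_ne i j with rfl | hne
      · simp [he]
      · rw [he, if_neg (fun h => hne h.symm), if_neg hne, mul_zero]
    rw [Finset.sum_congr rfl e2, Finset.sum_ite_eq']
    simp
  rw [hrep]
  exact Submodule.sum_mem _ fun i _ => Submodule.smul_mem _ _ (ee_mem_span hr1 T hT i)

lemma w_mem_span (hr1 : 1 ≤ r) (T : Finset (Fin r)) (hT : T.Nonempty) :
    wgt2 r ∈ Submodule.span ℤ ((VV r T : Set (Fin r → ℚ))) := by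
  obtain ⟨t, ht⟩ := hT
  have hL : ((2:ℚ)^r - 1) ≠ 0 := ne_of_gt (Lpos hr1)
  have h1 : ((2:ℤ)^r - 1) • wgt2 r ∈ Submodule.span ℤ ((VV r T : Set (Fin r → ℚ))) := by
    have hrep : ((2:ℤ)^r - 1) • wgt2 r = (fun i : Fin r => (((2:ℤ)^(i:ℕ) : ℤ) : ℚ)) := by
      funext j
      simp only [Pi.smul_apply, zsmul_eq_mul, wgt2]
      push_cast
      field_simp
    rw [hrep]
    exact coordvec_mem_span hr1 T ⟨t, ht⟩ _
  have h2 : ((2:ℤ)^(r - (t:ℕ))) • wgt2 r ∈ Submodule.span ℤ ((VV r T : Set (Fin r → ℚ))) := by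
    have hrep : ((2:ℤ)^(r - (t:ℕ))) • wgt2 r
        = hh r t + (fun i : Fin r => (((if (t:ℕ) ≤ (i:ℕ) then (2:ℤ)^((i:ℕ)-(t:ℕ)) else 0) : ℤ) : ℚ)) := by
      funext j
      simp only [Pi.smul_apply, zsmul_eq_mul, Pi.add_apply]
      rw [hh_coord hr1 t j]
      push_cast
      split_ifs <;> push_cast <;> ring
    rw [hrep]
    refine add_mem (Submodule.subset_span ?_) (coordvec_mem_span hr1 T ⟨t, ht⟩ _)
    exact Finset.mem_coe.2 (Finset.mem_union_right _ (Finset.mem_image_of_mem _ ht))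
  have key : wgt2 r = (-1 : ℤ) • (((2:ℤ)^r - 1) • wgt2 r)
      + ((2:ℤ)^(t:ℕ)) • (((2:ℤ)^(r-(t:ℕ))) • wgt2 r) := by
    rw [smul_smul, smul_smul, ← add_smul]
    have hs : (-1 : ℤ) * ((2:ℤ)^r - 1) + (2:ℤ)^(t:ℕ) * (2:ℤ)^(r-(t:ℕ)) = 1 := by
      rw [← pow_add]
      have he : (t:ℕ) + (r - (t:ℕ)) = r := by have := t.is_lt; omega
      rw [he]; ring
    rw [hs, one_smul]
  rw [key]
  exact add_mem (Submodule.smul_mem _ _ h1) (Submodule.smul_mem _ _ h2)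

lemma span_VV (hr1 : 1 ≤ r) (T : Finset (Fin r)) (hT : T.Nonempty) :
    Submodule.span ℤ ((VV r T : Set (Fin r → ℚ))) = NN r := by
  apply le_antisymm
  · rw [Submodule.span_le]
    intro x hx
    rw [Finset.mem_coe] at hx
    unfold VV at hx
    rcases Finset.mem_union.1 hx with hx | hx
    · obtain ⟨i, _, rfl⟩ := Finset.mem_image.1 hx
      exact memN2_ee i
    · obtain ⟨t, _, rfl⟩ := Finset.mem_image.1 hx
      exact memN2_hh hr1 t
  · rintro v ⟨a, c, rfl⟩
    exact add_mem (coordvec_mem_span hr1 T hT a)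
      (Submodule.smul_mem _ _ (w_mem_span hr1 T hT))

end span


section linind

lemma linind_VV (hr2 : 2 ≤ r) (T : Finset (Fin r)) (hT : T.Nonempty) :
    LinearIndependent ℤ
      (fun v : ((VV r T : Set (Fin r → ℚ))) => (v : Fin r → ℚ)) := by
  have hr1 : 1 ≤ r := by omega
  have hQ : LinearIndependent ℚ
      (fun v : ((VV r T : Set (Fin r → ℚ))) => (v : Fin r → ℚ)) := by
    apply linearIndependent_of_top_le_span_of_card_eq_finrank
    · rw [Subtype.range_coe]
      have h1 : ∀ k, ee k ∈ Submodule.span ℚ ((VV r T : Set (Fin r → ℚ))) := fun k =>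
        Submodule.span_subset_span ℤ ℚ _ (ee_mem_span hr1 T hT k)
      have h2 : Submodule.span ℚ (Set.range ⇑(Pi.basisFun ℚ (Fin r)))
          ≤ Submodule.span ℚ ((VV r T : Set (Fin r → ℚ))) := by
        rw [Submodule.span_le]
        rintro _ ⟨k, rfl⟩
        have : (Pi.basisFun ℚ (Fin r)) k = ee k := by
          rw [Pi.basisFun_apply]
          funext j
          rw [Pi.single_apply]
          rfl
        rw [this]
        exact h1 k
      rw [← (Pi.basisFun ℚ (Fin r)).span_eq] at *
      exact h2
    · simp only [Finset.coe_sort_coe, Fintype.card_coe, Module.finrank_pi, Fintype.card_fin]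
      exact card_VV hr2 T
  refine hQ.restrict_scalars ?_
  intro a b hab
  have : ((a : ℚ)) = ((b : ℚ)) := by simpa [zsmul_eq_mul] using hab
  exact_mod_cast this

end linind


section cover

lemma VV_disjoint (hr2 : 2 ≤ r) (T : Finset (Fin r)) :
    Disjoint (Tᶜ.image ee) (T.image (hh r)) := by
  rw [Finset.disjoint_left]
  rintro x hx1 hx2
  obtain ⟨i, _, rfl⟩ := Finset.mem_image.1 hx1
  obtain ⟨t, _, ht⟩ := Finset.mem_image.1 hx2
  exact ee_ne_hh hr2 i t ht.symm

lemma G_eq_of_lt (T : Finset (Fin r)) (hT : T.Nonempty) (t : Fin r)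
    (h : (π T hT t : ℕ) < (t:ℕ)) : G T hT t = (t:ℕ) - (π T hT t : ℕ) := by
  unfold G
  rw [mod2 (show r ≤ (t:ℕ) + r - (π T hT t : ℕ) - 1 by omega)
      (show (t:ℕ) + r - (π T hT t : ℕ) - 1 < r + r by have := t.is_lt; omega)]
  have := t.is_lt; omega

lemma G_eq_of_ge (T : Finset (Fin r)) (hT : T.Nonempty) (t : Fin r)
    (h : (t:ℕ) ≤ (π T hT t : ℕ)) : G T hT t = (t:ℕ) + r - (π T hT t : ℕ) := by
  unfold G
  rw [mod1 (show (t:ℕ) + r - (π T hT t : ℕ) - 1 < r by have := (π T hT t).is_lt; omega)]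
  have := (π T hT t).is_lt; omega

lemma EE_eq_of_le {t k : Fin r} (h : (t:ℕ) ≤ (k:ℕ)) : EE r t k = (k:ℕ) - (t:ℕ) := by
  unfold EE
  rw [mod2 (by omega) (by have := k.is_lt; omega)]
  omega

lemma EE_eq_of_gt {t k : Fin r} (h : (k:ℕ) < (t:ℕ)) : EE r t k = (k:ℕ) + r - (t:ℕ) := by
  unfold EE
  rw [mod1 (by omega)]

lemma cover (hr2 : 2 ≤ r) (y : Fin r → ℝ) (hy : ∀ k, 0 ≤ y k) :
    ∃ T : Finset (Fin r), T.Nonempty ∧ y ∈ posR (VV r T) := by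
  classical
  have hr1 : 1 ≤ r := by omega
  have hr0 : 0 < r := by omega
  haveI : NeZero r := ⟨by omega⟩
  set v : Fin r → ℝ := fun i => y i / 2^(i:ℕ) with hv
  have hvy : ∀ i, y i = v i * 2^(i:ℕ) := by
    intro i
    rw [hv]
    field_simp
  have hv0 : ∀ i, 0 ≤ v i := fun i => div_nonneg (hy i) (by positivity)
  have h2r : (1:ℝ) ≤ 2^r := by
    calc (1:ℝ) = 2^0 := by norm_num
    _ ≤ 2^r := pow_le_pow_right₀ (by norm_num) (Nat.zero_le r)
  obtain ⟨t₀, -, ht₀⟩ := Finset.exists_min_image Finset.univ v Finset.univ_nonempty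
  have hmin : ∀ j, v t₀ ≤ v j := fun j => ht₀ j (Finset.mem_univ j)
  set T := Finset.univ.filter
    (fun t : Fin r => (∀ j : Fin r, (j:ℕ) < (t:ℕ) → v t ≤ v j) ∧ v t ≤ 2^r * v t₀) with hTdef
  have hmemT : ∀ t ∈ T, (∀ j : Fin r, (j:ℕ) < (t:ℕ) → v t ≤ v j) ∧ v t ≤ 2^r * v t₀ := by
    intro t ht
    exact (Finset.mem_filter.1 ht).2
  have hinT : ∀ t : Fin r, (∀ j : Fin r, (j:ℕ) < (t:ℕ) → v t ≤ v j) →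
      v t ≤ 2^r * v t₀ → t ∈ T := by
    intro t h1 h2
    exact Finset.mem_filter.2 ⟨Finset.mem_univ t, h1, h2⟩
  have ht₀T : t₀ ∈ T :=
    hinT t₀ (fun j _ => hmin j) (by nlinarith [hv0 t₀])
  have hT : T.Nonempty := ⟨t₀, ht₀T⟩
  -- nonnegativity of the h-coefficients
  have hc : ∀ t ∈ T, 0 ≤ 2^(G T hT t) * y (π T hT t) - y t := by
    intro t ht
    have hpm := pi_mem T hT t
    have htT := hmemT _ ht
    rcases pi_spec T hT t with ⟨h1, h2⟩ | ⟨h1, h2⟩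
    · have h1' : (π T hT t : ℕ) < (t:ℕ) := h1
      rw [G_eq_of_lt T hT t h1']
      have hvp : v t ≤ v (π T hT t) := htT.1 _ h1'
      rw [hvy t, hvy (π T hT t)]
      have hpow : (2:ℝ)^((t:ℕ) - (π T hT t:ℕ)) * 2^((π T hT t:ℕ)) = 2^(t:ℕ) := by
        rw [← pow_add]; congr 1; omega
      have e : (2:ℝ)^((t:ℕ) - (π T hT t:ℕ)) * (v (π T hT t) * 2^((π T hT t:ℕ)))
          = v (π T hT t) * 2^(t:ℕ) := by
        calc (2:ℝ)^((t:ℕ) - (π T hT t:ℕ)) * (v (π T hT t) * 2^((π T hT t:ℕ)))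
            = ((2:ℝ)^((t:ℕ) - (π T hT t:ℕ)) * 2^((π T hT t:ℕ))) * v (π T hT t) := by ring
        _ = _ := by rw [hpow]; ring
      rw [e]
      have := mul_le_mul_of_nonneg_right hvp (pow_nonneg (by norm_num : (0:ℝ) ≤ 2) (t:ℕ))
      linarith
    · have h1' : (t:ℕ) ≤ (π T hT t : ℕ) := h1 _ hpm
      rw [G_eq_of_ge T hT t h1']
      have hb : v t ≤ 2^r * v t₀ := htT.2
      have hp0 : v t₀ ≤ v (π T hT t) := hmin _
      rw [hvy t, hvy (π T hT t)]
      have hpow : (2:ℝ)^((t:ℕ) + r - (π T hT t:ℕ)) * 2^((π T hT t:ℕ)) = 2^r * 2^(t:ℕ) := by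
        rw [← pow_add, ← pow_add]; congr 1
        have := (π T hT t).is_lt; omega
      have h2rp : (0:ℝ) < 2^r := by positivity
      have e : (2:ℝ)^((t:ℕ) + r - (π T hT t:ℕ)) * (v (π T hT t) * 2^((π T hT t:ℕ)))
          = (2^r * v (π T hT t)) * 2^(t:ℕ) := by
        calc (2:ℝ)^((t:ℕ) + r - (π T hT t:ℕ)) * (v (π T hT t) * 2^((π T hT t:ℕ)))
            = ((2:ℝ)^((t:ℕ) + r - (π T hT t:ℕ)) * 2^((π T hT t:ℕ))) * v (π T hT t) := by ring
        _ = _ := by rw [hpow]; ring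
      rw [e]
      have hch : v t ≤ 2^r * v (π T hT t) :=
        le_trans hb (mul_le_mul_of_nonneg_left hp0 (le_of_lt h2rp))
      have := mul_le_mul_of_nonneg_right hch (pow_nonneg (by norm_num : (0:ℝ) ≤ 2) (t:ℕ))
      linarith
  -- nonnegativity of the e-coefficients
  have hd : ∀ i ∈ Tᶜ, 0 ≤ y i - 2^(EE r (ρ T hT i) i) * y (ρ T hT i) := by
    intro i hi
    have hiT : i ∉ T := Finset.mem_compl.1 hi
    have hpm := rho_mem T hT i
    have hpT := hmemT _ hpm
    rcases rho_spec T hT i with ⟨h1, h2⟩ | ⟨h1, h2⟩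
    · have h1' : (ρ T hT i : ℕ) ≤ (i:ℕ) := h1
      have hne : ρ T hT i ≠ i := fun he => hiT (he ▸ hpm)
      have h1'' : (ρ T hT i : ℕ) < (i:ℕ) := by
        rcases Nat.lt_or_ge (ρ T hT i : ℕ) (i:ℕ) with h' | h'
        · exact h'
        · exact absurd (Fin.ext (by omega : (ρ T hT i : ℕ) = (i:ℕ))) hne
      rw [EE_eq_of_le (le_of_lt h1'')]
      have hvge : v (ρ T hT i) ≤ v i := by
        by_contra hcon
        push_neg at hcon
        obtain ⟨j, hjS, hjmin⟩ := Finset.exists_min_image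
          (Finset.univ.filter (fun j : Fin r => (ρ T hT i : ℕ) < (j:ℕ) ∧ (j:ℕ) ≤ (i:ℕ))) v
          ⟨i, Finset.mem_filter.2 ⟨Finset.mem_univ i, h1'', le_rfl⟩⟩
        obtain ⟨-, hj1, hj2⟩ := Finset.mem_filter.1 hjS
        have hji : v j ≤ v i :=
          hjmin i (Finset.mem_filter.2 ⟨Finset.mem_univ i, h1'', le_rfl⟩)
        have hjρ : v j < v (ρ T hT i) := lt_of_le_of_lt hji hcon
        have hjT : j ∈ T := by
          apply hinT
          · intro u hu
            rcases Nat.lt_or_ge (ρ T hT i : ℕ) (u:ℕ) with h' | h'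
            · exact hjmin u (Finset.mem_filter.2 ⟨Finset.mem_univ u, h', by omega⟩)
            · have hρu : v (ρ T hT i) ≤ v u := by
                rcases Nat.lt_or_ge (u:ℕ) (ρ T hT i :ℕ) with h'' | h''
                · exact hpT.1 u h''
                · rw [show u = ρ T hT i from Fin.ext (by omega)]
              linarith
          · linarith [hpT.2]
        have hcontra : (j:ℕ) ≤ (ρ T hT i :ℕ) := h2 j hjT (show j ≤ i from hj2)
        omega
      rw [hvy i, hvy (ρ T hT i)]
      have hpow : (2:ℝ)^((i:ℕ) - (ρ T hT i:ℕ)) * 2^((ρ T hT i:ℕ)) = 2^(i:ℕ) := by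
        rw [← pow_add]; congr 1; omega
      have e : (2:ℝ)^((i:ℕ) - (ρ T hT i:ℕ)) * (v (ρ T hT i) * 2^((ρ T hT i:ℕ)))
          = v (ρ T hT i) * 2^(i:ℕ) := by
        calc (2:ℝ)^((i:ℕ) - (ρ T hT i:ℕ)) * (v (ρ T hT i) * 2^((ρ T hT i:ℕ)))
            = ((2:ℝ)^((i:ℕ) - (ρ T hT i:ℕ)) * 2^((ρ T hT i:ℕ))) * v (ρ T hT i) := by ring
        _ = _ := by rw [hpow]; ring
      rw [e]
      have := mul_le_mul_of_nonneg_right hvge (pow_nonneg (by norm_num : (0:ℝ) ≤ 2) (i:ℕ))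
      linarith
    · have hρi : (i:ℕ) < (ρ T hT i : ℕ) := h1 _ hpm
      rw [EE_eq_of_gt hρi]
      have hρm : v (ρ T hT i) ≤ v t₀ := by
        have h' : (t₀:ℕ) ≤ (ρ T hT i : ℕ) := h2 t₀ ht₀T
        rcases Nat.lt_or_ge (t₀:ℕ) (ρ T hT i : ℕ) with h'' | h''
        · exact hpT.1 t₀ h''
        · rw [show ρ T hT i = t₀ from Fin.ext (by omega)]
      have h2rp : (0:ℝ) < 2^r := by positivity
      have hvge : 2^r * v (ρ T hT i) ≤ v i := by
        by_contra hcon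
        push_neg at hcon
        have hvi : v i < 2^r * v t₀ :=
          lt_of_lt_of_le hcon (mul_le_mul_of_nonneg_left hρm (le_of_lt h2rp))
        obtain ⟨j, hjS, hjmin⟩ := Finset.exists_min_image
          (Finset.univ.filter (fun j : Fin r => (j:ℕ) ≤ (i:ℕ))) v
          ⟨i, Finset.mem_filter.2 ⟨Finset.mem_univ i, le_rfl⟩⟩
        obtain ⟨-, hj1⟩ := Finset.mem_filter.1 hjS
        have hjT : j ∈ T := by
          apply hinT
          · intro u hu
            exact hjmin u (Finset.mem_filter.2 ⟨Finset.mem_univ u, by omega⟩)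
          · have : v j ≤ v i := hjmin i (Finset.mem_filter.2 ⟨Finset.mem_univ i, le_rfl⟩)
            linarith
        have : (i:ℕ) < (j:ℕ) := h1 j hjT
        omega
      rw [hvy i, hvy (ρ T hT i)]
      have hpow : (2:ℝ)^((i:ℕ) + r - (ρ T hT i:ℕ)) * 2^((ρ T hT i:ℕ)) = 2^r * 2^(i:ℕ) := by
        rw [← pow_add, ← pow_add]; congr 1
        have := (ρ T hT i).is_lt; omega
      have e : (2:ℝ)^((i:ℕ) + r - (ρ T hT i:ℕ)) * (v (ρ T hT i) * 2^((ρ T hT i:ℕ)))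
          = (2^r * v (ρ T hT i)) * 2^(i:ℕ) := by
        calc (2:ℝ)^((i:ℕ) + r - (ρ T hT i:ℕ)) * (v (ρ T hT i) * 2^((ρ T hT i:ℕ)))
            = ((2:ℝ)^((i:ℕ) + r - (ρ T hT i:ℕ)) * 2^((ρ T hT i:ℕ))) * v (ρ T hT i) := by ring
        _ = _ := by rw [hpow]; ring
      rw [e]
      have := mul_le_mul_of_nonneg_right hvge (pow_nonneg (by norm_num : (0:ℝ) ≤ 2) (i:ℕ))
      linarith
  -- the expansion of y
  have hLR : ((2:ℝ)^r - 1) ≠ 0 := by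
    have h2' : (2:ℝ)^1 ≤ 2^r := pow_le_pow_right₀ (by norm_num) hr1
    norm_num at h2'
    intro hcon
    nlinarith
  have main : y = (∑ t ∈ T, (2^(G T hT t) * y (π T hT t) - y t) • castQR (hh r t))
      + ∑ i ∈ Tᶜ, (y i - 2^(EE r (ρ T hT i) i) * y (ρ T hT i)) • castQR (ee i) := by
    funext k
    have hE := expansion hLR T hT y k
    simp only [Pi.add_apply, Finset.sum_apply, Pi.smul_apply, smul_eq_mul]
    rw [← hE]
    congr 1
    · refine Finset.sum_congr rfl fun t _ => ?_
      have hcast : castQR (hh r t) k = (2:ℝ)^(EE r t k) / ((2:ℝ)^r - 1) := by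
        unfold castQR hh
        push_cast
        ring
      rw [hcast]
    · refine Finset.sum_congr rfl fun i _ => ?_
      have hcast : castQR (ee i) k = (if k = i then (1:ℝ) else 0) := by
        unfold castQR ee
        split_ifs <;> norm_num
      rw [hcast]
  -- assemble the posR witness
  refine ⟨T, hT, ?_⟩
  refine ⟨fun b => (∑ t ∈ T, if b = hh r t then 2^(G T hT t) * y (π T hT t) - y t else 0)
      + (∑ i ∈ Tᶜ, if b = ee i then y i - 2^(EE r (ρ T hT i) i) * y (ρ T hT i) else 0),
      ?_, ?_⟩
  · intro b
    apply add_nonneg <;> refine Finset.sum_nonneg fun x hx => ?_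
    · split_ifs with h
      · exact hc x hx
      · exact le_rfl
    · split_ifs with h
      · exact hd x hx
      · exact le_rfl
  · have hval2 : ∀ t ∈ T,
        ((∑ t' ∈ T, if hh r t = hh r t' then 2^(G T hT t') * y (π T hT t') - y t' else 0)
          + (∑ i ∈ Tᶜ, if hh r t = ee i then y i - 2^(EE r (ρ T hT i) i) * y (ρ T hT i) else 0))
        = 2^(G T hT t) * y (π T hT t) - y t := by
      intro t ht
      have e1 : ∀ t' ∈ T, (if hh r t = hh r t' then 2^(G T hT t') * y (π T hT t') - y t' else 0)
          = if t' = t then 2^(G T hT t') * y (π T hT t') - y t' else 0 := by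
        intro t' _
        congr 1
        simp only [eq_iff_iff]
        constructor
        · intro h; exact hh_inj hr1 h.symm
        · rintro rfl; rfl
      have e2 : ∀ i ∈ Tᶜ, (if hh r t = ee i then y i - 2^(EE r (ρ T hT i) i) * y (ρ T hT i) else 0) = 0 := by
        intro i _
        rw [if_neg (fun h => ee_ne_hh hr2 i t h.symm)]
      rw [Finset.sum_congr rfl e1, Finset.sum_congr rfl e2, Finset.sum_ite_eq', if_pos ht,
          Finset.sum_const_zero, add_zero]
    have hval1 : ∀ i ∈ Tᶜ,
        ((∑ t ∈ T, if ee i = hh r t then 2^(G T hT t) * y (π T hT t) - y t else 0)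
          + (∑ i' ∈ Tᶜ, if ee i = ee i' then y i' - 2^(EE r (ρ T hT i') i') * y (ρ T hT i') else 0))
        = y i - 2^(EE r (ρ T hT i) i) * y (ρ T hT i) := by
      intro i hi
      have e1 : ∀ t ∈ T, (if ee i = hh r t then 2^(G T hT t) * y (π T hT t) - y t else 0) = 0 := by
        intro t _
        rw [if_neg (ee_ne_hh hr2 i t)]
      have e2 : ∀ i' ∈ Tᶜ, (if ee i = ee i' then y i' - 2^(EE r (ρ T hT i') i') * y (ρ T hT i') else 0)
          = if i' = i then y i' - 2^(EE r (ρ T hT i') i') * y (ρ T hT i') else 0 := by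
        intro i' _
        congr 1
        simp only [eq_iff_iff]
        constructor
        · intro h; exact ee_inj h.symm
        · rintro rfl; rfl
      rw [Finset.sum_congr rfl e1, Finset.sum_congr rfl e2, Finset.sum_ite_eq', if_pos hi,
          Finset.sum_const_zero, zero_add]
    show y = ∑ b ∈ VV r T, _ • castQR b
    unfold VV
    rw [Finset.sum_union (VV_disjoint hr2 T),
        Finset.sum_image (fun x _ y _ h => ee_inj h),
        Finset.sum_image (fun x _ y _ h => hh_inj hr1 h)]
    have hsum1 : (∑ i ∈ Tᶜ,
          ((∑ t ∈ T, if ee i = hh r t then 2^(G T hT t) * y (π T hT t) - y t else 0)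
            + ∑ i' ∈ Tᶜ, if ee i = ee i' then y i' - 2^(EE r (ρ T hT i') i') * y (ρ T hT i') else 0)
          • castQR (ee i))
        = ∑ i ∈ Tᶜ, (y i - 2^(EE r (ρ T hT i) i) * y (ρ T hT i)) • castQR (ee i) :=
      Finset.sum_congr rfl fun i hi => by rw [hval1 i hi]
    have hsum2 : (∑ t ∈ T,
          ((∑ t' ∈ T, if hh r t = hh r t' then 2^(G T hT t') * y (π T hT t') - y t' else 0)
            + ∑ i ∈ Tᶜ, if hh r t = ee i then y i - 2^(EE r (ρ T hT i) i) * y (ρ T hT i) else 0)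
          • castQR (hh r t))
        = ∑ t ∈ T, (2^(G T hT t) * y (π T hT t) - y t) • castQR (hh r t) :=
      Finset.sum_congr rfl fun t ht => by rw [hval2 t ht]
    rw [hsum1, hsum2, add_comm]
    exact main


lemma sum_ee (i : Fin r) : ∑ k, ee i k = 1 := by
  have h : ∀ k ∈ Finset.univ (α := Fin r), ee i k = if k = i then (1:ℚ) else 0 :=
    fun _ _ => rfl
  rw [Finset.sum_congr rfl h, Finset.sum_ite_eq', if_pos (Finset.mem_univ i)]

lemma posR_orthant (hr1 : 1 ≤ r) (T : Finset (Fin r)) {x : Fin r → ℝ}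
    (hx : x ∈ posR (VV r T)) (k : Fin r) : 0 ≤ x k := by
  obtain ⟨cf, hcf, rfl⟩ := hx
  simp only [Finset.sum_apply, Pi.smul_apply, smul_eq_mul]
  refine Finset.sum_nonneg fun b hb => mul_nonneg (hcf b) ?_
  have hb0 : (0:ℚ) ≤ b k := by
    unfold VV at hb
    rcases Finset.mem_union.1 hb with h | h
    · obtain ⟨i, _, rfl⟩ := Finset.mem_image.1 h
      exact ee_nonneg i k
    · obtain ⟨t, _, rfl⟩ := Finset.mem_image.1 h
      exact hh_nonneg hr1 t k
  unfold castQR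
  exact_mod_cast hb0

end cover

end pred

end GPS

/-- For every `r ≥ 2` the positive orthant can be covered by cones over
`r`-element subsets of `s_G ∩ N`, each of which is a `ℤ`-basis of the lattice
`N = ℤ^r + ℤ·(1/(2^r−1))(1, 2, 2², …, 2^{r−1})`: the combinatorial form (via
basic triangulations of the junior simplex) of the statement that the
singularity of type `(1/(2^r−1))(1, 2, …, 2^{r−1})` admits a crepant full
resolution in all dimensions. -/
theorem geometric_progress_singularity_resolvable (r : ℕ) (hr : 2 ≤ r) :
    ∃ (m : ℕ) (B : Fin m → Finset (Fin r → ℚ)),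
      (∀ i, (B i).card = r) ∧
      (∀ i, ∀ v ∈ B i, memN2 r v ∧ (∀ k, 0 ≤ v k) ∧ ∑ k, v k = 1) ∧
      (∀ i, LinearIndependent ℤ
          (fun v : ((B i : Set (Fin r → ℚ))) => (v : Fin r → ℚ))) ∧
      (∀ i, (Submodule.span ℤ ((B i : Set (Fin r → ℚ))) : Set (Fin r → ℚ))
          = {v | memN2 r v}) ∧
      {y : Fin r → ℝ | ∀ k, 0 ≤ y k} = ⋃ i, posR (B i) := by
  classical
  have hr1 : 1 ≤ r := by omega
  set eqv := Fintype.equivFin {T : Finset (Fin r) // T.Nonempty} with heqv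
  refine ⟨Fintype.card {T : Finset (Fin r) // T.Nonempty},
    fun i => GPS.VV r ((eqv.symm i) : {T : Finset (Fin r) // T.Nonempty}).1,
    ?_, ?_, ?_, ?_, ?_⟩
  · intro i
    exact GPS.card_VV hr _
  · intro i v hv
    unfold GPS.VV at hv
    rcases Finset.mem_union.1 hv with h | h
    · obtain ⟨j, _, rfl⟩ := Finset.mem_image.1 h
      exact ⟨GPS.memN2_ee j, fun k => GPS.ee_nonneg j k, GPS.sum_ee j⟩
    · obtain ⟨t, _, rfl⟩ := Finset.mem_image.1 h
      exact ⟨GPS.memN2_hh hr1 t, fun k => GPS.hh_nonneg hr1 t k, GPS.sum_hh hr1 t⟩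
  · intro i
    exact GPS.linind_VV hr _ (eqv.symm i).2
  · intro i
    rw [GPS.span_VV hr1 _ (eqv.symm i).2]
    rfl
  · ext y
    simp only [Set.mem_setOf_eq, Set.mem_iUnion]
    constructor
    · intro hy
      obtain ⟨T, hT, hmem⟩ := GPS.cover hr y hy
      refine ⟨eqv ⟨T, hT⟩, ?_⟩
      have h : ((eqv.symm (eqv ⟨T, hT⟩)) : {T : Finset (Fin r) // T.Nonempty}).1 = T := by
        rw [Equiv.symm_apply_apply]
      rw [h]
      exact hmem
    · rintro ⟨i, hy⟩ k
      exact GPS.posR_orthant hr1 _ hy k
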